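/- Suppose random variables $X, Z, \eta, \varepsilon$ satisfy $Z \perp \varepsilon \mid \eta$ and additionally $X$ is $\sigma(Z, \eta, \zeta)$-measurable with $\zeta \perp (Z, \varepsilon) \mid \eta$. Let $g$ be bounded measurable. Then for each fixed $x$, $\mathbb{E}[g(x,\varepsilon) \mid X, Z, \eta] = \mathbb{E}[g(x,\varepsilon) \mid \eta]$ almost surely, and hence $\mathbb{E}[g(x,\varepsilon) \mid X = x', Z = z] = \int \mathbb{E}[g(x,\varepsilon) \mid \eta = e] f_{\eta|XZ}(e \mid x', z) \, de$. -/

import Mathlib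

/-!
Two contractions of conditional independence turn `Z ⟂ ε | η` and `ζ ⟂ (Z, ε) | η` into
`(Z, ζ, η) ⟂ ε | η` (the second one uses that `η` is conditionally independent of anything given
itself), hence `(X, Z, η) ⟂ ε | η` because `X` is a function of `(Z, η, ζ)`. If a σ-algebra
`m₁ ⊇ σ(η)` is conditionally independent of `ε` given `η`, then conditioning a function of `ε` on
`m₁` gives the same result as conditioning it on `η`: for indicators this is the identity
`∫ in s, P(t | η) = P(s ∩ t)` for `s ∈ m₁`, and it extends to `L¹` by density. The second claim is
the tower property for `σ(X, Z) ≤ σ(X, Z, η)`.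
-/

open MeasureTheory ProbabilityTheory

namespace MeasurableSpace

theorem isPiSystem_image2_inter_measurableSet {Ω : Type*} (m₁ m₂ : MeasurableSpace Ω) :
    IsPiSystem (Set.image2 (· ∩ ·) {s | MeasurableSet[m₁] s} {s | MeasurableSet[m₂] s}) := by
  rintro _ ⟨a, ha, b, hb, rfl⟩ _ ⟨a', ha', b', hb', rfl⟩ -
  exact ⟨a ∩ a', ha.inter ha', b ∩ b', hb.inter hb', Set.inter_inter_inter_comm a a' b b'⟩

theorem generateFrom_image2_inter_measurableSet {Ω : Type*} (m₁ m₂ : MeasurableSpace Ω) :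
    generateFrom (Set.image2 (· ∩ ·) {s | MeasurableSet[m₁] s} {s | MeasurableSet[m₂] s}) =
      m₁ ⊔ m₂ := by
  refine le_antisymm (generateFrom_le ?_) (sup_le (fun a ha => ?_) fun b hb => ?_)
  · rintro _ ⟨a, ha, b, hb, rfl⟩
    exact (le_sup_left (b := m₂) a ha).inter (le_sup_right (a := m₁) b hb)
  · exact measurableSet_generateFrom ⟨a, ha, Set.univ, .univ, Set.inter_univ a⟩
  · exact measurableSet_generateFrom ⟨Set.univ, .univ, b, hb, Set.univ_inter b⟩

end MeasurableSpace

namespace ProbabilityTheory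

variable {Ω : Type*} {m m' m₁ m₂ m₃ mΩ : MeasurableSpace Ω} {μ : Measure Ω} [IsFiniteMeasure μ]

theorem condExp_ae_eq_of_forall_condExp_indicator_ae_eq (hm₁ : m₁ ≤ mΩ) (hm₂ : m₂ ≤ mΩ)
    (hm : m ≤ mΩ) (h : ∀ t, MeasurableSet[m] t → μ⟦t | m₁⟧ =ᵐ[μ] μ⟦t | m₂⟧) {f : Ω → ℝ}
    (hf : AEStronglyMeasurable[m] f μ) : μ[f | m₁] =ᵐ[μ] μ[f | m₂] := by
  by_cases hfi : Integrable f μ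
  swap
  · simp only [condExp_of_not_integrable hfi, Filter.EventuallyEq.rfl]
  refine MemLp.induction_stronglyMeasurable hm ENNReal.one_ne_top
    (fun f => μ[f | m₁] =ᵐ[μ] μ[f | m₂]) ?_ ?_ ?_ ?_ (memLp_one_iff_integrable.2 hfi) hf
  · intro c t ht _
    have hc : t.indicator (fun _ => c) = c • t.indicator (fun _ => (1 : ℝ)) := by
      ext ω; by_cases hω : ω ∈ t <;> simp [hω]
    rw [hc]
    exact (condExp_smul c _ m₁).trans (((h t ht).const_smul c).trans (condExp_smul c _ m₂).symm)
  · intro u v _ hu hv _ _ huv hvv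
    rw [memLp_one_iff_integrable] at hu hv
    exact (condExp_add hu hv m₁).trans ((huv.add hvv).trans (condExp_add hu hv m₂).symm)
  · have hL1 {m₀ : MeasurableSpace Ω} (hm₀ : m₀ ≤ mΩ) (u : Lp ℝ 1 μ) :
        μ[u | m₀] =ᵐ[μ] condExpL1CLM ℝ hm₀ μ u := by
      simpa only [Integrable.toL1_coeFn] using
        condExp_ae_eq_condExpL1CLM hm₀ (L1.integrable_coeFn u)
    convert isClosed_eq ((condExpL1CLM ℝ hm₁ μ).continuous.comp continuous_subtype_val)
      ((condExpL1CLM ℝ hm₂ μ).continuous.comp continuous_subtype_val) using 3 with u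
    rw [Function.comp_apply, Function.comp_apply, Lp.ext_iff]
    exact ⟨fun hu => (hL1 hm₁ u).symm.trans (hu.trans (hL1 hm₂ u)),
      fun hu => (hL1 hm₁ u).trans (hu.trans (hL1 hm₂ u).symm)⟩
  · intro u v huv _ hu
    exact (condExp_congr_ae huv.symm).trans (hu.trans (condExp_congr_ae huv))

section CondIndep

variable [StandardBorelSpace Ω] {hm' : m' ≤ mΩ}

theorem CondIndep.setIntegral_condExp_indicator (hm₁ : m₁ ≤ mΩ) (hm₂ : m₂ ≤ mΩ)
    (h : CondIndep m' m₁ m₂ hm' μ) {s t : Set Ω} (hs : MeasurableSet[m₁] s)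
    (ht : MeasurableSet[m₂] t) : ∫ ω in s, (μ⟦t | m'⟧) ω ∂μ = μ.real (s ∩ t) := by
  have hind : s.indicator (fun _ => (1 : ℝ)) * μ⟦t | m'⟧ = s.indicator (μ⟦t | m'⟧) := by
    ext ω; by_cases hω : ω ∈ s <;> simp [hω]
  calc ∫ ω in s, (μ⟦t | m'⟧) ω ∂μ
      = ∫ ω, (μ[s.indicator (fun _ => (1 : ℝ)) * μ⟦t | m'⟧ | m']) ω ∂μ := by
        rw [integral_condExp hm', hind, integral_indicator (hm₁ s hs)]
    _ = ∫ ω, (μ⟦s | m'⟧ * μ⟦t | m'⟧) ω ∂μ := by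
        refine integral_congr_ae (condExp_mul_of_stronglyMeasurable_right
          stronglyMeasurable_condExp ?_ ((integrable_const 1).indicator (hm₁ s hs)))
        rw [hind]
        exact integrable_condExp.indicator (hm₁ s hs)
    _ = ∫ ω, (μ⟦s ∩ t | m'⟧) ω ∂μ :=
        integral_congr_ae ((condIndep_iff m' m₁ m₂ hm' hm₁ hm₂ μ).1 h s t hs ht).symm
    _ = μ.real (s ∩ t) := by
        rw [integral_condExp hm', integral_indicator ((hm₁ s hs).inter (hm₂ t ht)),
          setIntegral_const, smul_eq_mul, mul_one]

theorem CondIndep.condExp_indicator_ae_eq_of_le (hm₁ : m₁ ≤ mΩ) (hm₂ : m₂ ≤ mΩ)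
    (h : CondIndep m' m₁ m₂ hm' μ) (hle : m' ≤ m₁) {t : Set Ω} (ht : MeasurableSet[m₂] t) :
    μ⟦t | m₁⟧ =ᵐ[μ] μ⟦t | m'⟧ := by
  refine (ae_eq_condExp_of_forall_setIntegral_eq hm₁
    ((integrable_const 1).indicator (hm₂ t ht)) (fun _ _ _ => integrable_condExp.integrableOn)
    (fun s hs _ => ?_) (stronglyMeasurable_condExp.mono hle).aestronglyMeasurable).symm
  rw [h.setIntegral_condExp_indicator hm₁ hm₂ hs ht, setIntegral_indicator (hm₂ t ht),
    setIntegral_const, smul_eq_mul, mul_one]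

theorem CondIndep.condExp_ae_eq_of_le (hm₁ : m₁ ≤ mΩ) (hm₂ : m₂ ≤ mΩ)
    (h : CondIndep m' m₁ m₂ hm' μ) (hle : m' ≤ m₁) {f : Ω → ℝ}
    (hf : AEStronglyMeasurable[m₂] f μ) : μ[f | m₁] =ᵐ[μ] μ[f | m'] :=
  condExp_ae_eq_of_forall_condExp_indicator_ae_eq hm₁ hm' hm₂
    (fun _ ht => h.condExp_indicator_ae_eq_of_le hm₁ hm₂ hle ht) hf

/-- The contraction property of conditional independence. -/
theorem CondIndep.sup_left_of_sup_right (hm₁ : m₁ ≤ mΩ) (hm₂ : m₂ ≤ mΩ) (hm₃ : m₃ ≤ mΩ)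
    (h₁₂ : CondIndep m' m₁ m₂ hm' μ) (h₃ : CondIndep m' m₃ (m₁ ⊔ m₂) hm' μ) :
    CondIndep m' (m₁ ⊔ m₃) m₂ hm' μ := by
  have h₁₂' := (condIndep_iff m' m₁ m₂ hm' hm₁ hm₂ μ).1 h₁₂
  have h₃' := (condIndep_iff m' m₃ (m₁ ⊔ m₂) hm' hm₃ (sup_le hm₁ hm₂) μ).1 h₃
  refine CondIndepSets.condIndep (sup_le hm₁ hm₃) hm₂
    (MeasurableSpace.isPiSystem_image2_inter_measurableSet m₁ m₃)
    (@MeasurableSpace.isPiSystem_measurableSet Ω m₂)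
    (MeasurableSpace.generateFrom_image2_inter_measurableSet m₁ m₃).symm
    (@MeasurableSpace.generateFrom_measurableSet Ω m₂).symm ?_
  refine (condIndepSets_iff _ _ _ _ ?_ (fun t ht => hm₂ t ht) μ).2 ?_
  · rintro _ ⟨a, ha, b, hb, rfl⟩
    exact (hm₁ a ha).inter (hm₃ b hb)
  rintro _ t ⟨a, ha, b, hb, rfl⟩ ht
  have ha' : MeasurableSet[m₁ ⊔ m₂] a := le_sup_left (b := m₂) a ha
  filter_upwards [h₃' b (a ∩ t) hb (ha'.inter (le_sup_right (a := m₁) t ht)), h₃' b a hb ha',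
    h₁₂' a t ha ht] with ω hb_at hb_a ha_t
  simp only [Pi.mul_apply] at hb_at hb_a ha_t ⊢
  rw [Set.inter_comm a b, Set.inter_assoc, hb_at, hb_a, ha_t, mul_assoc]

theorem CondIndepFun.prodMk_left_of_prodMk_right {β γ δ : Type*} [MeasurableSpace β]
    [MeasurableSpace γ] [MeasurableSpace δ] {f : Ω → β} {g : Ω → γ} {k : Ω → δ}
    (hf : Measurable f) (hg : Measurable g) (hk : Measurable k)
    (hfg : CondIndepFun m' hm' f g μ) (hkfg : CondIndepFun m' hm' k (fun ω => (f ω, g ω)) μ) :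
    CondIndepFun m' hm' (fun ω => (f ω, k ω)) g μ := by
  rw [condIndepFun_iff_condIndep] at hfg hkfg ⊢
  erw [MeasurableSpace.comap_prodMk] at hkfg ⊢
  exact hfg.sup_left_of_sup_right hf.comap_le hg.comap_le hk.comap_le hkfg

end CondIndep

end ProbabilityTheory

theorem multivalued_treatment_cond_indep_step_general
    {Ω 𝒳 𝒵 ℰ ℋ 𝒮 : Type*} [MeasurableSpace Ω] [StandardBorelSpace Ω]
    [MeasurableSpace 𝒳] [MeasurableSpace 𝒵] [MeasurableSpace ℰ]
    [MeasurableSpace ℋ] [MeasurableSpace 𝒮]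
    (μ : Measure Ω) [IsProbabilityMeasure μ]
    (X : Ω → 𝒳) (Z : Ω → 𝒵) (ε : Ω → ℰ) (η : Ω → ℋ) (ζ : Ω → 𝒮)
    (hX : Measurable X) (hZ : Measurable Z) (hε : Measurable ε)
    (hη : Measurable η) (hζ : Measurable ζ)
    -- Z ⟂ ε | η
    (hZε : CondIndepFun (MeasurableSpace.comap η inferInstance) hη.comap_le Z ε μ)
    -- ζ ⟂ (Z,ε) | η
    (hζZε : CondIndepFun (MeasurableSpace.comap η inferInstance) hη.comap_le
      ζ (fun ω => (Z ω, ε ω)) μ)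
    -- X is a measurable function of (Z,η,ζ)
    (hXfun : ∃ φ : 𝒵 × ℋ × 𝒮 → 𝒳, Measurable φ ∧ ∀ ω, X ω = φ (Z ω, η ω, ζ ω))
    (g : 𝒳 → ℰ → ℝ) (hg : Measurable (fun p : 𝒳 × ℰ => g p.1 p.2))
    (x : 𝒳) :
    (μ[fun ω => g x (ε ω) | MeasurableSpace.comap (fun ω => (X ω, Z ω, η ω)) inferInstance]
        =ᵐ[μ] μ[fun ω => g x (ε ω) | MeasurableSpace.comap η inferInstance]) ∧
    (μ[fun ω => g x (ε ω) | MeasurableSpace.comap (fun ω => (X ω, Z ω)) inferInstance]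
        =ᵐ[μ] μ[μ[fun ω => g x (ε ω) | MeasurableSpace.comap η inferInstance]
            | MeasurableSpace.comap (fun ω => (X ω, Z ω)) inferInstance]) := by
  obtain ⟨φ, hφ, hXφ⟩ := hXfun
  have hW : CondIndepFun (MeasurableSpace.comap η inferInstance) hη.comap_le
      (fun ω => ((Z ω, ζ ω), η ω)) ε μ :=
    (hZε.prodMk_left_of_prodMk_right hZ hε hζ hζZε).prodMk_left_of_prodMk_right
      (hZ.prodMk hζ) hε hη (condIndepFun_self_left ((hZ.prodMk hζ).prodMk hε) hη)
  have hV : CondIndepFun (MeasurableSpace.comap η inferInstance) hη.comap_le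
      (fun ω => (X ω, Z ω, η ω)) ε μ := by
    convert hW.comp (φ := fun p => (φ (p.1.1, p.2, p.1.2), p.1.1, p.2)) (by fun_prop)
      measurable_id using 1
    · exact funext fun ω => by simp [hXφ]
    · rfl
  have hVm : Measurable fun ω => (X ω, Z ω, η ω) := hX.prodMk (hZ.prodMk hη)
  have hηV : MeasurableSpace.comap η inferInstance
      ≤ MeasurableSpace.comap (fun ω => (X ω, Z ω, η ω)) inferInstance :=
    (measurable_snd.snd.comp (comap_measurable (fun ω => (X ω, Z ω, η ω)))).comap_le
  have hgε : Measurable[MeasurableSpace.comap ε inferInstance] fun ω => g x (ε ω) :=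
    (hg.comp measurable_prodMk_left).comp (comap_measurable ε)
  have hXZη := ((condIndepFun_iff_condIndep _ _ _ _ _).1 hV).condExp_ae_eq_of_le hVm.comap_le
    hε.comap_le hηV hgε.aestronglyMeasurable
  have hXZ : MeasurableSpace.comap (fun ω => (X ω, Z ω)) inferInstance
      ≤ MeasurableSpace.comap (fun ω => (X ω, Z ω, η ω)) inferInstance :=
    ((measurable_fst.prodMk measurable_snd.fst).comp
      (comap_measurable (fun ω => (X ω, Z ω, η ω)))).comap_le
  exact ⟨hXZη, (condExp_condExp_of_le hXZ hVm.comap_le).symm.trans (condExp_congr_ae hXZη)⟩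

/-- Conditional-independence step in the multi-valued treatment model
`Y = g(X,ε)`, `X = h(Z,η,ζ)` with `ζ ⟂ (Z,ε) | η` and `Z ⟂ ε | η`:
for each fixed `x`, `E[g(x,ε) | X,Z,η] = E[g(x,ε) | η]` a.s., and hence
`E[g(x,ε) | X,Z] = E[ E[g(x,ε) | η] | X,Z ]` a.s. (the integral against the
conditional distribution of `η` given `(X,Z)`). -/
theorem multivalued_treatment_cond_indep_step
    {Ω 𝒳 𝒵 ℰ ℋ 𝒮 : Type*} [MeasurableSpace Ω] [StandardBorelSpace Ω]
    [MeasurableSpace 𝒳] [MeasurableSpace 𝒵] [MeasurableSpace ℰ]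
    [MeasurableSpace ℋ] [MeasurableSpace 𝒮]
    (μ : Measure Ω) [IsProbabilityMeasure μ]
    (X : Ω → 𝒳) (Z : Ω → 𝒵) (ε : Ω → ℰ) (η : Ω → ℋ) (ζ : Ω → 𝒮)
    (hX : Measurable X) (hZ : Measurable Z) (hε : Measurable ε)
    (hη : Measurable η) (hζ : Measurable ζ)
    -- Z ⟂ ε | η
    (hZε : CondIndepFun (MeasurableSpace.comap η inferInstance) hη.comap_le Z ε μ)
    -- ζ ⟂ (Z,ε) | η
    (hζZε : CondIndepFun (MeasurableSpace.comap η inferInstance) hη.comap_le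
      ζ (fun ω => (Z ω, ε ω)) μ)
    -- X is a measurable function of (Z,η,ζ)
    (hXfun : ∃ φ : 𝒵 × ℋ × 𝒮 → 𝒳, Measurable φ ∧ ∀ ω, X ω = φ (Z ω, η ω, ζ ω))
    (g : 𝒳 → ℰ → ℝ) (hg : Measurable (fun p : 𝒳 × ℰ => g p.1 p.2))
    (hgb : ∃ M, ∀ x e, |g x e| ≤ M)
    (x : 𝒳) :
    (μ[fun ω => g x (ε ω) | MeasurableSpace.comap (fun ω => (X ω, Z ω, η ω)) inferInstance]
        =ᵐ[μ] μ[fun ω => g x (ε ω) | MeasurableSpace.comap η inferInstance]) ∧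
    (μ[fun ω => g x (ε ω) | MeasurableSpace.comap (fun ω => (X ω, Z ω)) inferInstance]
        =ᵐ[μ] μ[μ[fun ω => g x (ε ω) | MeasurableSpace.comap η inferInstance]
            | MeasurableSpace.comap (fun ω => (X ω, Z ω)) inferInstance]) :=
  multivalued_treatment_cond_indep_step_general μ X Z ε η ζ hX hZ hε hη hζ hZε hζZε hXfun g hg x
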